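/- Let Z be a profinite set and let d be a nonzero integer. The sequence 0 → M₀(Z,ℤ) → M₀(Z,ℤ) → M₀(Z,ℤ/dℤ) → 0 is exact, where the first nontrivial map is multiplication by d and the second is postcomposition of measures with the reduction homomorphism ℤ → ℤ/dℤ. -/

import Mathlib

open TopologicalSpace

/-- The additive group of `A`-valued measures on a topological space `Z`:
functions on clopen subsets satisfying `ν U = ν V + ν (U \ V)` for clopen `V ⊆ U`. -/
def MeasAdd (Z : Type*) [TopologicalSpace Z] (A : Type*) [AddCommGroup A] :
    AddSubgroup (Clopens Z → A) where
  carrier := {ν | ∀ U V : Clopens Z, (V : Set Z) ⊆ (U : Set Z) → ν U = ν V + ν (U \ V)}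
  add_mem' := by
    intro a b ha hb U V h
    simp only [Pi.add_apply, ha U V h, hb U V h]
    abel
  zero_mem' := by intro U V h; simp
  neg_mem' := by
    intro a ha U V h
    simp only [Pi.neg_apply, ha U V h]
    abel

theorem MeasAdd.apply_diff {Z : Type*} [TopologicalSpace Z] {A : Type*} [AddCommGroup A]
    (ν : MeasAdd Z A) (U V : Clopens Z) (h : (V : Set Z) ⊆ (U : Set Z)) :
    ν.1 U = ν.1 V + ν.1 (U \ V) := ν.2 U V h

/-- Pushforward of measures along a continuous map. -/
noncomputable def pushMeas {Z W : Type*} [TopologicalSpace Z] [TopologicalSpace W] {A : Type*}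
    [AddCommGroup A] (f : Z → W) (hf : Continuous f) (ν : MeasAdd Z A) : MeasAdd W A :=
  ⟨fun U => ν.1 ⟨f ⁻¹' (U : Set W), U.isClopen.preimage hf⟩, by
    intro U V h
    dsimp only
    have h2 := MeasAdd.apply_diff ν ⟨f ⁻¹' (U : Set W), U.isClopen.preimage hf⟩
      ⟨f ⁻¹' (V : Set W), V.isClopen.preimage hf⟩ (fun x hx => Set.preimage_mono h hx)
    rw [h2]
    congr 1⟩

/-- Postcomposition of a measure with a group homomorphism. -/
noncomputable def mapMeas {Z : Type*} [TopologicalSpace Z] {A B : Type*} [AddCommGroup A]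
    [AddCommGroup B] (φ : A →+ B) (ν : MeasAdd Z A) : MeasAdd Z B :=
  ⟨fun U => φ (ν.1 U), by
    intro U V h
    dsimp only
    rw [MeasAdd.apply_diff ν U V h, map_add]⟩

/-- The counting measure on a finite topological space. -/
noncomputable def countMeas (X : Type*) [TopologicalSpace X] [Finite X] : MeasAdd X ℤ :=
  ⟨fun U => ((U : Set X).ncard : ℤ), by
    intro U V h
    dsimp only
    have h2 : ((U : Set X) \ (V : Set X)).ncard + (V : Set X).ncard = (U : Set X).ncard :=
      Set.ncard_diff_add_ncard_of_subset h (Set.toFinite _)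
    have h3 : ((U \ V : Clopens X) : Set X) = (U : Set X) \ (V : Set X) := rfl
    rw [h3]
    omega⟩

section Aux

open TopologicalSpace Classical

variable {Z : Type*} [TopologicalSpace Z] {A : Type*} [AddCommGroup A]

theorem MeasAdd.apply_bot' (ν : MeasAdd Z A) : ν.1 ⊥ = 0 := by
  have h := ν.2 ⊥ ⊥ subset_rfl
  rw [sdiff_self] at h
  exact (left_eq_add.mp h)

theorem Clopens.disjoint_of_coe {a b : Clopens Z} (h : Disjoint (a : Set Z) (b : Set Z)) :
    Disjoint a b := by
  rw [disjoint_iff] at h ⊢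
  exact SetLike.coe_injective h

theorem MeasAdd.apply_sup (ν : MeasAdd Z A) (a b : Clopens Z) (h : Disjoint a b) :
    ν.1 (a ⊔ b) = ν.1 a + ν.1 b := by
  have h2 := ν.2 (a ⊔ b) a (by intro x hx; exact Set.mem_union_left _ hx)
  rw [h.sup_sdiff_cancel_left] at h2
  rw [h2, add_comm]

theorem Clopens.coe_finsetSup {ι : Type*} (S : Finset ι) (U : ι → Clopens Z) :
    ((S.sup U : Clopens Z) : Set Z) = ⋃ i ∈ S, (U i : Set Z) := by
  rw [← Finset.sup_set_eq_biUnion]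
  exact map_finset_sup (⟨⟨(↑), Clopens.coe_sup⟩, Clopens.coe_bot⟩ :
    SupBotHom (Clopens Z) (Set Z)) _ _

theorem MeasAdd.apply_finsetSup {ι : Type*} (ν : MeasAdd Z A) (S : Finset ι)
    (U : ι → Clopens Z) (h : ∀ i ∈ S, ∀ j ∈ S, i ≠ j → Disjoint (U i) (U j)) :
    ν.1 (S.sup U) = ∑ i ∈ S, ν.1 (U i) := by
  classical
  induction S using Finset.induction_on with
  | empty => simpa using MeasAdd.apply_bot' ν
  | @insert a S ha ih =>
    rw [Finset.sup_insert, Finset.sum_insert ha, MeasAdd.apply_sup ν, ih]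
    · intro i hi j hj hij
      exact h i (Finset.mem_insert_of_mem hi) j (Finset.mem_insert_of_mem hj) hij
    · rw [Finset.disjoint_sup_right]
      intro i hi
      exact h a (Finset.mem_insert_self a S) i (Finset.mem_insert_of_mem hi)
        (fun e => ha (e ▸ hi))

variable (Z) in
/-- The fiber of a locally constant function, as a clopen set. -/
def lcFib {W : Type*} (f : LocallyConstant Z W) (w : W) : Clopens Z :=
  ⟨f ⁻¹' {w}, f.isLocallyConstant.isClopen_fiber w⟩

theorem lcFib_of_not_mem_range {W : Type*} {f : LocallyConstant Z W} {w : W}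
    (h : w ∉ Set.range f) : lcFib Z f w = ⊥ := by
  apply SetLike.coe_injective
  simp only [lcFib, Clopens.coe_bot, Clopens.coe_mk]
  ext x
  simp only [Set.mem_preimage, Set.mem_singleton_iff, Set.mem_empty_iff_false, iff_false]
  exact fun hx => h ⟨x, hx⟩

theorem lcFib_disjoint {W : Type*} {f : LocallyConstant Z W} {v w : W} (h : v ≠ w) :
    Disjoint (lcFib Z f v) (lcFib Z f w) := by
  apply Clopens.disjoint_of_coe
  rw [Set.disjoint_left]
  intro x hv hw
  exact h (by simp only [lcFib, Clopens.coe_mk, Set.mem_preimage,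
    Set.mem_singleton_iff] at hv hw; rw [← hv, ← hw])

variable [CompactSpace Z]

/-- The integral of a locally constant `ℤ`-valued function against a measure. -/
noncomputable def integ (ρ : MeasAdd Z A) (f : LocallyConstant Z ℤ) : A :=
  ∑ a ∈ f.range_finite.toFinset, a • ρ.1 (lcFib Z f a)

theorem integ_map (ρ : MeasAdd Z A) {W : Type*} [DecidableEq W] (h : LocallyConstant Z W)
    (u : W → ℤ) (T : Finset W) (hT : Set.range h ⊆ (T : Set W)) :
    integ ρ (h.map u) = ∑ w ∈ T, u w • ρ.1 (lcFib Z h w) := by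
  classical
  have key : ∀ a : ℤ, lcFib Z (h.map u) a = (T.filter (fun w => u w = a)).sup (lcFib Z h) := by
    intro a
    apply SetLike.coe_injective
    rw [Clopens.coe_finsetSup]
    ext x
    simp only [lcFib, Clopens.coe_mk, Set.mem_preimage, Set.mem_singleton_iff,
      Set.mem_iUnion, Finset.mem_filter, LocallyConstant.map_apply, Function.comp_apply]
    constructor
    · intro hx
      exact ⟨h x, ⟨hT ⟨x, rfl⟩, hx⟩, rfl⟩
    · rintro ⟨w, ⟨_, hw⟩, hx⟩
      rw [hx, hw]
  have hrng : (h.map u).range_finite.toFinset ⊆ T.image u := by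
    intro a ha
    rw [Set.Finite.mem_toFinset] at ha
    obtain ⟨x, hx⟩ := ha
    exact Finset.mem_image.mpr ⟨h x, hT ⟨x, rfl⟩, hx⟩
  rw [integ, Finset.sum_subset hrng]
  · have step : ∀ a ∈ T.image u,
        a • ρ.1 (lcFib Z (h.map u) a) = ∑ w ∈ T.filter (fun w => u w = a), u w • ρ.1 (lcFib Z h w) := by
      intro a _
      rw [key a, MeasAdd.apply_finsetSup ρ _ _ (fun i hi j hj hij => lcFib_disjoint hij),
        Finset.smul_sum]
      apply Finset.sum_congr rfl
      intro w hw
      rw [(Finset.mem_filter.mp hw).2]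
    rw [Finset.sum_congr rfl step]
    exact Finset.sum_fiberwise_of_maps_to (fun w hw => Finset.mem_image_of_mem u hw) _
  · intro a _ ha
    rw [Set.Finite.mem_toFinset] at ha
    rw [lcFib_of_not_mem_range ha, MeasAdd.apply_bot' ρ]
    exact smul_zero a

theorem integ_add (ρ : MeasAdd Z A) (f g : LocallyConstant Z ℤ) :
    integ ρ (f + g) = integ ρ f + integ ρ g := by
  classical
  set h : LocallyConstant Z (ℤ × ℤ) :=
    ⟨fun x => (f x, g x), f.isLocallyConstant.prodMk g.isLocallyConstant⟩ with hh
  set T : Finset (ℤ × ℤ) := h.range_finite.toFinset with hT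
  have hsub : Set.range h ⊆ (T : Set (ℤ × ℤ)) := fun w hw =>
    Finset.mem_coe.mpr (h.range_finite.mem_toFinset.mpr hw)
  have e1 : f = h.map Prod.fst := by ext x; rfl
  have e2 : g = h.map Prod.snd := by ext x; rfl
  have e3 : f + g = h.map (fun p => p.1 + p.2) := by ext x; rfl
  rw [e3, e1, e2, integ_map ρ h _ T hsub, integ_map ρ h _ T hsub,
    integ_map ρ h _ T hsub, ← Finset.sum_add_distrib]
  apply Finset.sum_congr rfl
  intro w _
  rw [add_smul]

/-- Integration against a measure, as an additive homomorphism. -/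
noncomputable def integHom (ρ : MeasAdd Z A) : LocallyConstant Z ℤ →+ A :=
  AddMonoidHom.mk' (integ ρ) (integ_add ρ)

end Aux

section Ind

open TopologicalSpace Classical

variable {Z : Type*} [TopologicalSpace Z] {A : Type*} [AddCommGroup A]

/-- The indicator function of a clopen set, as a locally constant integer function. -/
noncomputable def indLC (U : Clopens Z) : LocallyConstant Z ℤ :=
  ⟨fun x => if x ∈ (U : Set Z) then 1 else 0, by
    intro s
    by_cases h1 : (1 : ℤ) ∈ s <;> by_cases h0 : (0 : ℤ) ∈ s
    · convert isOpen_univ using 1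
      ext x
      simp only [Set.mem_preimage, Set.mem_univ, iff_true]
      split_ifs <;> assumption
    · convert U.isClopen.2 using 1
      ext x
      simp only [Set.mem_preimage]
      split_ifs with hx <;> simp [hx, h1, h0]
    · convert U.isClopen.1.isOpen_compl using 1
      ext x
      simp only [Set.mem_preimage, Set.mem_compl_iff]
      split_ifs with hx <;> simp [hx, h1, h0]
    · convert isOpen_empty using 1
      ext x
      simp only [Set.mem_preimage, Set.mem_empty_iff_false, iff_false]
      split_ifs <;> assumption⟩

theorem indLC_apply (U : Clopens Z) (x : Z) :
    indLC U x = if x ∈ (U : Set Z) then 1 else 0 := rfl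

theorem indLC_sdiff {U V : Clopens Z} (h : (V : Set Z) ⊆ (U : Set Z)) :
    indLC U = indLC V + indLC (U \ V) := by
  ext x
  simp only [LocallyConstant.coe_add, Pi.add_apply, indLC_apply, Clopens.coe_sdiff,
    Set.mem_diff]
  have hsub : x ∈ (V : Set Z) → x ∈ (U : Set Z) := fun hx => h hx
  split_ifs <;> simp_all [Set.mem_diff]

theorem lcFib_indLC_one (U : Clopens Z) : lcFib Z (indLC U) 1 = U := by
  apply SetLike.coe_injective
  ext x
  simp only [lcFib, Clopens.coe_mk, Set.mem_preimage, Set.mem_singleton_iff, indLC_apply]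
  show (indLC U x ∈ ({1} : Set ℤ)) ↔ x ∈ (U : Set Z)
  rw [Set.mem_singleton_iff, indLC_apply]
  split_ifs with hx <;> simp [hx]

theorem integ_indLC [CompactSpace Z] (ρ : MeasAdd Z A) (U : Clopens Z) :
    integ ρ (indLC U) = ρ.1 U := by
  classical
  have hid : indLC U = (indLC U).map id := by ext x; rfl
  have hsub : Set.range (indLC U) ⊆ (({0, 1} : Finset ℤ) : Set ℤ) := by
    rintro a ⟨x, rfl⟩
    rw [indLC_apply]
    split_ifs <;> simp
  rw [hid, integ_map ρ (indLC U) id ({0, 1} : Finset ℤ) hsub,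
    Finset.sum_pair (by norm_num : (0 : ℤ) ≠ 1)]
  simp [lcFib_indLC_one U]

/-- The measure associated to an additive homomorphism on locally constant functions. -/
noncomputable def homMeas (ψ : LocallyConstant Z ℤ →+ A) : MeasAdd Z A :=
  ⟨fun U => ψ (indLC U), by
    intro U V h
    dsimp only
    rw [indLC_sdiff h, map_add]⟩

/-- The Dirac measure at a point. -/
noncomputable def diracMeas (z : Z) : MeasAdd Z ℤ :=
  ⟨fun U => if z ∈ (U : Set Z) then 1 else 0, by
    intro U V h
    dsimp only
    have hsub : z ∈ (V : Set Z) → z ∈ (U : Set Z) := fun hz => h hz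
    simp only [Clopens.coe_sdiff]
    split_ifs <;> simp_all [Set.mem_diff]⟩

theorem diracMeas_apply_top (z : Z) : (diracMeas z).1 ⊤ = 1 := by
  show (if z ∈ ((⊤ : Clopens Z) : Set Z) then (1 : ℤ) else 0) = 1
  split_ifs with h
  · rfl
  · exact absurd (Set.mem_univ z) h

end Ind

/-- For a profinite set `Z` and a nonzero integer `d`, the sequence
`0 → M₀(Z, ℤ) → M₀(Z, ℤ) → M₀(Z, ℤ/dℤ) → 0` is exact, where the first nontrivial map is
multiplication by `d` and the second is postcomposition with the reduction `ℤ → ℤ/dℤ`. -/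
theorem total_value_zero_measures_mod_d_exact
    (Z : Type*) [TopologicalSpace Z] [CompactSpace Z] [T2Space Z] [TotallyDisconnectedSpace Z]
    (d : ℤ) (hd : d ≠ 0) :
    (∀ ν : MeasAdd Z ℤ, ν.1 ⊤ = 0 → d • ν = 0 → ν = 0) ∧
    (∀ ν : MeasAdd Z ℤ, ν.1 ⊤ = 0 →
      (mapMeas (Int.castAddHom (ZMod d.natAbs)) ν = 0 ↔
        ∃ μ : MeasAdd Z ℤ, μ.1 ⊤ = 0 ∧ d • μ = ν)) ∧
    (∀ ρ : MeasAdd Z (ZMod d.natAbs), ρ.1 ⊤ = 0 →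
      ∃ ν : MeasAdd Z ℤ, ν.1 ⊤ = 0 ∧ mapMeas (Int.castAddHom (ZMod d.natAbs)) ν = ρ) := by
  haveI : NeZero d.natAbs := ⟨Int.natAbs_ne_zero.mpr hd⟩
  refine ⟨?_, ?_, ?_⟩
  · -- injectivity of multiplication by d
    intro ν _ h
    apply Subtype.ext
    funext U
    have h2 : d • ν.1 U = 0 := congrArg (fun μ : MeasAdd Z ℤ => μ.1 U) h
    rw [zsmul_eq_mul] at h2
    have h3 := mul_eq_zero.mp h2
    show ν.1 U = 0
    tauto
  · -- exactness in the middle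
    intro ν hν
    constructor
    · intro h0
      have hdvd : ∀ U : Clopens Z, d ∣ ν.1 U := by
        intro U
        have h1 : ((ν.1 U : ℤ) : ZMod d.natAbs) = 0 :=
          congrArg (fun μ : MeasAdd Z (ZMod d.natAbs) => μ.1 U) h0
        rw [← Int.natAbs_dvd]
        exact (ZMod.intCast_zmod_eq_zero_iff_dvd _ _).mp h1
      refine ⟨⟨fun U => ν.1 U / d, ?_⟩, ?_, ?_⟩
      · intro U V h
        dsimp only
        obtain ⟨a, ha⟩ := hdvd V
        obtain ⟨b, hb⟩ := hdvd (U \ V)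
        have hU : ν.1 U = d * (a + b) := by rw [ν.2 U V h, ha, hb]; ring
        rw [hU, ha, hb, Int.mul_ediv_cancel_left _ hd, Int.mul_ediv_cancel_left _ hd,
          Int.mul_ediv_cancel_left _ hd]
      · show ν.1 ⊤ / d = 0
        rw [hν, Int.zero_ediv]
      · apply Subtype.ext
        funext U
        show d • (ν.1 U / d) = ν.1 U
        rw [zsmul_eq_mul, Int.cast_id, Int.mul_ediv_cancel' (hdvd U)]
    · rintro ⟨μ, hμ, rfl⟩
      apply Subtype.ext
      funext U
      show ((d • μ.1 U : ℤ) : ZMod d.natAbs) = 0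
      have hd0 : ((d : ℤ) : ZMod d.natAbs) = 0 :=
        (ZMod.intCast_zmod_eq_zero_iff_dvd d _).mpr (Int.natAbs_dvd.mpr dvd_rfl)
      rw [zsmul_eq_mul]
      push_cast
      rw [hd0, zero_mul]
  · -- surjectivity
    intro ρ hρ
    cases isEmpty_or_nonempty Z with
    | inl hZ =>
      refine ⟨0, rfl, ?_⟩
      apply Subtype.ext
      funext U
      have hU : U = ⊥ := SetLike.coe_injective (Set.eq_empty_of_isEmpty _)
      show ((0 : ℤ) : ZMod d.natAbs) = ρ.1 U
      rw [hU, MeasAdd.apply_bot' ρ, Int.cast_zero]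
    | inr hZ =>
      haveI : Module.Free ℤ (LocallyConstant Z ℤ) :=
        LocallyConstant.freeOfProfinite (Profinite.of Z)
      set φ : LocallyConstant Z ℤ →+ ZMod d.natAbs := integHom ρ with hφ
      set b := Module.Free.chooseBasis ℤ (LocallyConstant Z ℤ) with hb
      choose c hc using fun i => ZMod.intCast_surjective (n := d.natAbs) (φ (b i))
      set ψ : LocallyConstant Z ℤ →ₗ[ℤ] ℤ := b.constr ℤ c with hψ
      have hcomp : ∀ f : LocallyConstant Z ℤ, ((ψ f : ℤ) : ZMod d.natAbs) = φ f := by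
        intro f
        have hext : ((Int.castAddHom (ZMod d.natAbs)).toIntLinearMap.comp ψ)
            = φ.toIntLinearMap := by
          apply b.ext
          intro i
          simp only [LinearMap.comp_apply, hψ, Module.Basis.constr_basis]
          exact hc i
        exact DFunLike.congr_fun hext f
      set ν₀ : MeasAdd Z ℤ := homMeas ψ.toAddMonoidHom with hν₀def
      have hν₀ : ∀ U : Clopens Z, ((ν₀.1 U : ℤ) : ZMod d.natAbs) = ρ.1 U := by
        intro U
        show ((ψ (indLC U) : ℤ) : ZMod d.natAbs) = ρ.1 U
        rw [hcomp]
        exact integ_indLC ρ U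
      obtain ⟨z⟩ := hZ
      set t : ℤ := ν₀.1 ⊤ with ht
      have htz : ((t : ℤ) : ZMod d.natAbs) = 0 := by rw [hν₀ ⊤, hρ]
      have hδ : (diracMeas z).1 ⊤ = 1 := diracMeas_apply_top z
      refine ⟨ν₀ - t • diracMeas z, ?_, ?_⟩
      · show ν₀.1 ⊤ - t • (diracMeas z).1 ⊤ = 0
        rw [hδ, smul_eq_mul, mul_one, ← ht, sub_self]
      · apply Subtype.ext
        funext U
        show ((ν₀.1 U - t • (diracMeas z).1 U : ℤ) : ZMod d.natAbs) = ρ.1 U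
        rw [zsmul_eq_mul]
        push_cast
        rw [hν₀ U, htz, zero_mul, sub_zero]
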